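/- arXiv:1707.01239 — 2 statements merged into one kernel-verified Lean document; each statement's English description precedes it below -/
import Mathlib

section
/- In any placement of disks of sizes ≥ 1, each touching the x-axis from above with pairwise non-overlapping interiors, the open support intervals (f_A − 2a + 1, f_A + 2a − 1) of distinct disks are pairwise disjoint. Consequently the span of the placement is at least the sum of the support interval lengths Σᵢ (4aᵢ − 2). -/
/-- In any valid placement of disks of sizes ≥ 1 (footpoints f i, sizes a i,
non-overlap: |f i - f j| ≥ 2 a i a j for i ≠ j), the open support intervals
are pairwise disjoint, and the span is at least Σ (4 a i - 2). -/
theorem support_intervals_disjoint (n : ℕ) (hn : 0 < n)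
    (f a : Fin n → ℝ) (ha : ∀ i, 1 ≤ a i)
    (hsep : ∀ i j, i ≠ j → 2 * a i * a j ≤ |f i - f j|) :
    (∀ i j, i ≠ j →
      Disjoint (Set.Ioo (f i - (2 * a i - 1)) (f i + (2 * a i - 1)))
               (Set.Ioo (f j - (2 * a j - 1)) (f j + (2 * a j - 1)))) ∧
    (∑ i, (4 * a i - 2)) ≤
      (Finset.univ.sup' (Finset.univ_nonempty_iff.mpr
          (Fin.pos_iff_nonempty.mp hn)) fun i => f i + (a i) ^ 2) -
      (Finset.univ.inf' (Finset.univ_nonempty_iff.mpr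
          (Fin.pos_iff_nonempty.mp hn)) fun i => f i - (a i) ^ 2) := by
  have key : ∀ i j : Fin n, i ≠ j → 2 * a i + 2 * a j - 2 ≤ |f i - f j| := by
    intro i j hij
    refine le_trans ?_ (hsep i j hij)
    nlinarith [ha i, ha j, mul_le_mul (le_refl (a i)) (ha j) zero_le_one (le_trans zero_le_one (ha i))]
  have hdisj : ∀ i j, i ≠ j →
      Disjoint (Set.Ioo (f i - (2 * a i - 1)) (f i + (2 * a i - 1)))
               (Set.Ioo (f j - (2 * a j - 1)) (f j + (2 * a j - 1))) := by
    intro i j hij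
    rw [Set.disjoint_left]
    rintro x ⟨h1, h2⟩ ⟨h3, h4⟩
    have := key i j hij
    rcases abs_cases (f i - f j) with ⟨he, _⟩ | ⟨he, _⟩ <;> rw [he] at this <;> linarith
  refine ⟨hdisj, ?_⟩
  set ne : Finset.univ.Nonempty := Finset.univ_nonempty_iff.mpr (Fin.pos_iff_nonempty.mp hn)
  set U := Finset.univ.sup' ne fun i => f i + (a i) ^ 2 with hU
  set L := Finset.univ.inf' ne fun i => f i - (a i) ^ 2 with hL
  have hLle : ∀ i, L ≤ f i - (a i) ^ 2 := fun i => Finset.inf'_le (fun j => f j - (a j) ^ 2) (Finset.mem_univ i)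
  have hUle : ∀ i, f i + (a i) ^ 2 ≤ U := fun i => Finset.le_sup' (fun j => f j + (a j) ^ 2) (Finset.mem_univ i)
  have hsub : ∀ i : Fin n, Set.Ioo (f i - (2 * a i - 1)) (f i + (2 * a i - 1)) ⊆ Set.Icc L U := by
    intro i
    refine Set.Ioo_subset_Icc_self.trans (Set.Icc_subset_Icc ?_ ?_)
    · have := hLle i; nlinarith [ha i, sq_nonneg (a i - 1)]
    · have := hUle i; nlinarith [ha i, sq_nonneg (a i - 1)]
  have hLU : L ≤ U := by
    obtain ⟨i⟩ := Fin.pos_iff_nonempty.mp hn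
    have := hLle i; have := hUle i; nlinarith [sq_nonneg (a i)]
  -- measure argument
  have hmeas : (Finset.univ : Finset (Fin n)).sum
      (fun i => MeasureTheory.volume (Set.Ioo (f i - (2 * a i - 1)) (f i + (2 * a i - 1))))
      ≤ MeasureTheory.volume (Set.Icc L U) := by
    rw [← MeasureTheory.measure_biUnion_finset]
    · exact MeasureTheory.measure_mono (Set.iUnion₂_subset fun i _ => hsub i)
    · intro i _ j _ hij
      exact hdisj i j hij
    · intro i _; exact measurableSet_Ioo
  have hvol : ∀ i : Fin n, MeasureTheory.volume (Set.Ioo (f i - (2 * a i - 1)) (f i + (2 * a i - 1)))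
      = ENNReal.ofReal (4 * a i - 2) := by
    intro i
    rw [Real.volume_Ioo]
    congr 1; ring
  rw [Real.volume_Icc] at hmeas
  simp only [hvol] at hmeas
  have hnn : ∀ i ∈ (Finset.univ : Finset (Fin n)), 0 ≤ 4 * a i - 2 := by
    intro i _; have := ha i; linarith
  rw [← ENNReal.ofReal_sum_of_nonneg hnn] at hmeas
  exact (ENNReal.ofReal_le_ofReal_iff (by linarith)).mp hmeas
end

section
/- Minimize (a + 2b + d − 2)/(ad) subject to 2 ≤ a ≤ 3, 1 ≤ d ≤ a, 1 ≤ b ≤ 2, and (a−b)·d < a + b. The infimum is 7/9 (attained in the limit a = d = 3, b = 3/2), and in particular (a + 2b + d − 2)/(ad) ≥ 7/9 > 3/4 on this domain. -/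
lemma key_ratio (a b d : ℝ) (ha : 2 ≤ a) (ha3 : a ≤ 3) (hd : 1 ≤ d) (hda : d ≤ a)
    (hb : 1 ≤ b) (hb2 : b ≤ 2) (h : (a - b) * d < a + b) :
    (a + 2 * b + d - 2) / (a * d) ≥ 7 / 9 := by
  have had : 0 < a * d := by nlinarith
  have hk : 0 < a + b - (a - b) * d := by linarith
  rw [ge_iff_le, le_div_iff₀ had]
  nlinarith [mul_nonneg (sub_nonneg.2 hb) (sub_nonneg.2 hd),
    mul_nonneg (sub_nonneg.2 ha3) (sub_nonneg.2 hd),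
    mul_nonneg (sub_nonneg.2 hda) (sub_nonneg.2 hd),
    mul_nonneg hk.le (sub_nonneg.2 hd),
    mul_nonneg hk.le (by linarith : (0:ℝ) ≤ 3 - d),
    mul_nonneg hk.le (by linarith : (0:ℝ) ≤ 3 - a),
    sq_nonneg (d - 3), sq_nonneg (a - 3), sq_nonneg (a - d)]

/-- Minimizing (a + 2b + d - 2)/(ad) subject to 2 ≤ a ≤ 3, 1 ≤ d ≤ a,
1 ≤ b ≤ 2 and (a - b)d < a + b: the infimum is 7/9, and in particular the
ratio is at least 7/9 > 3/4 on the whole domain. -/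
theorem min_ratio_nontouching :
    (∀ a b d : ℝ, 2 ≤ a → a ≤ 3 → 1 ≤ d → d ≤ a → 1 ≤ b → b ≤ 2 →
      (a - b) * d < a + b → (a + 2 * b + d - 2) / (a * d) ≥ 7 / 9) ∧
    sInf {r : ℝ | ∃ a b d : ℝ, 2 ≤ a ∧ a ≤ 3 ∧ 1 ≤ d ∧ d ≤ a ∧ 1 ≤ b ∧
      b ≤ 2 ∧ (a - b) * d < a + b ∧ r = (a + 2 * b + d - 2) / (a * d)}
      = 7 / 9 ∧
    (7 : ℝ) / 9 > 3 / 4 := by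
  set S := {r : ℝ | ∃ a b d : ℝ, 2 ≤ a ∧ a ≤ 3 ∧ 1 ≤ d ∧ d ≤ a ∧ 1 ≤ b ∧
      b ≤ 2 ∧ (a - b) * d < a + b ∧ r = (a + 2 * b + d - 2) / (a * d)} with hS
  have hlb : ∀ r ∈ S, (7:ℝ)/9 ≤ r := by
    rintro r ⟨a, b, d, ha, ha3, hd, hda, hb, hb2, h, rfl⟩
    exact key_ratio a b d ha ha3 hd hda hb hb2 h
  have hmem : ∀ δ : ℝ, 0 < δ → δ ≤ 1/2 → ((7 + 2*δ)/9 : ℝ) ∈ S := by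
    intro δ h1 h2
    refine ⟨3, 3/2 + δ, 3, by norm_num, by norm_num, by norm_num, by norm_num,
      by linarith, by linarith, by nlinarith, by ring_nf⟩
  have hne : S.Nonempty := ⟨_, hmem (1/2) (by norm_num) le_rfl⟩
  have hbdd : BddBelow S := ⟨7/9, hlb⟩
  refine ⟨fun a b d ha ha3 hd hda hb hb2 h => key_ratio a b d ha ha3 hd hda hb hb2 h,
    le_antisymm ?_ (le_csInf hne hlb), by norm_num⟩
  rw [Real.sInf_le_iff hbdd hne]
  intro ε hε
  refine ⟨(7 + 2 * min ε (1/2))/9, hmem _ (lt_min hε (by norm_num)) (min_le_right _ _), ?_⟩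
  have := min_le_left ε (1/2)
  nlinarith [lt_min hε (show (0:ℝ) < 1/2 by norm_num)]
end
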